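/- Let $n \ge 3$ and $m = n-1$. Let $G$ be a symmetric positive definite $m \times m$ real matrix, let $N$ be a real number, and let $s_1, \dots, s_m$ be real numbers. Define the $n \times n$ matrix $A^{(\rho)}$ as the block-diagonal matrix with top-left $m \times m$ block $\frac{n-1}{n-2} G$ and bottom-right entry $1$, and for each $a \in \{1,\dots,m\}$ define the $n \times n$ matrix $A^{(a)}$ in block form with top-left $m \times m$ block $-\frac{n-1}{n-2} s_a G$, top-right $m \times 1$ block $-N$ times the $a$-th column of $G$, bottom-left $1 \times m$ block $-N$ times the $a$-th row of $G$, and bottom-right entry $-s_a$. Then $A^{(\rho)}$ is symmetric and positive definite, and each $A^{(a)}$ is symmetric; hence the first-order system $A^{(\rho)} \partial_\rho \mathbf{u} + A^{(K)} \partial_K \mathbf{u} + \mathcal{B} = 0$ with these coefficient matrices is a first-order symmetric hyperbolic system. -/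

import Mathlib

open Matrix

namespace Matrix

section Symmetric

variable {m α : Type*} [Mul α]

theorem IsSymm.fromBlocks_smul_col_row {G : Matrix m m α} (hG : G.IsSymm) (c b d : α) (a : m) :
    (Matrix.fromBlocks (c • G) (of fun i (_ : Unit) => b * G i a) (of fun _ j => b * G a j)
      (of fun _ _ => d)).IsSymm :=
  (hG.smul c).fromBlocks (by ext i j; exact congrArg (b * ·) (hG.apply a j)) (by ext; rfl)

end Symmetric

section PosDef

variable {m n R : Type*} [Fintype m] [Fintype n] [Ring R] [StarRing R]

theorem dotProduct_fromBlocks_zero_mulVec (A : Matrix m m R) (D : Matrix n n R) (x : m ⊕ n → R) :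
    star x ⬝ᵥ (fromBlocks A 0 0 D *ᵥ x) =
      star (x ∘ Sum.inl) ⬝ᵥ (A *ᵥ (x ∘ Sum.inl)) + star (x ∘ Sum.inr) ⬝ᵥ (D *ᵥ (x ∘ Sum.inr)) := by
  rw [fromBlocks_mulVec, ← Sum.elim_comp_inl_inr x]
  simp only [dotProduct, Sum.elim_comp_inl_inr, Pi.star_apply, zero_mulVec, add_zero, zero_add,
    Fintype.sum_sum_type, Sum.elim_inl, Sum.elim_inr, Function.comp_apply]

theorem PosDef.fromBlocks_zero [PartialOrder R] [IsOrderedAddMonoid R] {A : Matrix m m R}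
    {D : Matrix n n R} (hA : A.PosDef) (hD : D.PosDef) : (fromBlocks A 0 0 D).PosDef := by
  refine PosDef.of_dotProduct_mulVec_pos
    (hA.isHermitian.fromBlocks (by simp) hD.isHermitian) fun x hx => ?_
  rw [dotProduct_fromBlocks_zero_mulVec]
  by_cases hl : x ∘ Sum.inl = 0
  · have hr : x ∘ Sum.inr ≠ 0 := by
      rintro hr
      exact hx (by rw [← Sum.elim_comp_inl_inr x, hl, hr]; ext (i | i) <;> rfl)
    exact add_pos_of_nonneg_of_pos (hA.posSemidef.dotProduct_mulVec_nonneg _)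
      (hD.dotProduct_mulVec_pos hr)
  · exact add_pos_of_pos_of_nonneg (hA.dotProduct_mulVec_pos hl)
      (hD.posSemidef.dotProduct_mulVec_nonneg _)

end PosDef

end Matrix

theorem momentum_constraint_symmetric_hyperbolic
    (n : ℕ) (hn : 3 ≤ n)
    (G : Matrix (Fin (n - 1)) (Fin (n - 1)) ℝ) (hG : G.PosDef)
    (N : ℝ) (s : Fin (n - 1) → ℝ)
    (Aρ : Matrix (Fin (n - 1) ⊕ Unit) (Fin (n - 1) ⊕ Unit) ℝ)
    (hAρ : Aρ = Matrix.fromBlocks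
      (Matrix.of fun i j => ((n : ℝ) - 1) / ((n : ℝ) - 2) * G i j)
      0 0 1)
    (A : Fin (n - 1) → Matrix (Fin (n - 1) ⊕ Unit) (Fin (n - 1) ⊕ Unit) ℝ)
    (hA : ∀ a, A a = Matrix.fromBlocks
      (Matrix.of fun i j => -(((n : ℝ) - 1) / ((n : ℝ) - 2)) * s a * G i j)
      (Matrix.of fun i _ => -N * G i a)
      (Matrix.of fun _ j => -N * G a j)
      (Matrix.of fun _ _ => -s a)) :
    Aρ.IsSymm ∧ Aρ.PosDef ∧ ∀ a, (A a).IsSymm := by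
  have hc : 0 < ((n : ℝ) - 1) / ((n : ℝ) - 2) := by
    have : (3 : ℝ) ≤ n := by exact_mod_cast hn
    exact div_pos (by linarith) (by linarith)
  have hAρ_posDef : Aρ.PosDef := hAρ ▸ (hG.smul hc).fromBlocks_zero PosDef.one
  have hG_symm : G.IsSymm := isHermitian_iff_isSymm.mp hG.isHermitian
  exact ⟨isHermitian_iff_isSymm.mp hAρ_posDef.isHermitian, hAρ_posDef,
    fun a => hA a ▸ hG_symm.fromBlocks_smul_col_row _ _ _ a⟩
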